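/- If ν is a node of the search tree 𝒯(G,π₀) and g ∈ Aut(G,π₀), then ν^g is also a node of 𝒯(G,π₀), and the subtree rooted at ν^g equals the image under g of the subtree rooted at ν: 𝒯(G,π₀,ν^g) = 𝒯(G,π₀,ν)^g. -/

import Mathlib

/-- Relabelling action of a permutation on a graph: `v^g` adjacent to `w^g` iff `v` adjacent `w`. -/
def gactG {n : ℕ} (g : Equiv.Perm (Fin n)) (G : SimpleGraph (Fin n)) : SimpleGraph (Fin n) where
  Adj v w := G.Adj (g⁻¹ v) (g⁻¹ w)
  symm := ⟨fun _ _ h => G.adj_symm h⟩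
  loopless := ⟨fun _ h => G.irrefl h⟩

/-- Relabelling action of a permutation on a colouring. -/
def gactC {n : ℕ} (g : Equiv.Perm (Fin n)) (π : Fin n → ℕ) : Fin n → ℕ :=
  fun v => π (g⁻¹ v)

/-- A colouring of `V`: a function surjective onto `{1,…,k}` for some `k`. -/
def IsCol {n : ℕ} (π : Fin n → ℕ) : Prop := ∃ k, Set.range π = Set.Icc 1 k

/-- `π'` is finer than or equal to `π`. -/
def FinerC {n : ℕ} (π' π : Fin n → ℕ) : Prop := ∀ v w, π v < π w → π' v < π' w

/-- Nodes of the search tree with child rule given by the target cells `Tc`. -/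
inductive IsTNode {n : ℕ} (Tc : List (Fin n) → Set (Fin n)) : List (Fin n) → Prop
  | root : IsTNode Tc []
  | child {ν : List (Fin n)} {w : Fin n} :
      IsTNode Tc ν → w ∈ Tc ν → IsTNode Tc (ν ++ [w])

/-- The labelled graph `G^π` for a (discrete) colouring `π`, as a set of labelled edges. -/
def relabelSet {n : ℕ} (G : SimpleGraph (Fin n)) (π : Fin n → ℕ) : Set (ℕ × ℕ) :=
  {p | ∃ v w, G.Adj v w ∧ π v = p.1 ∧ π w = p.2}

/-- Equitable colouring: same-coloured vertices have equally many neighbours of each colour. -/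
def IsEquit {n : ℕ} (G : SimpleGraph (Fin n)) (π : Fin n → ℕ) : Prop :=
  ∀ v w, π v = π w → ∀ j,
    {u | G.Adj v u ∧ π u = j}.ncard = {u | G.Adj w u ∧ π u = j}.ncard

namespace IsTNode

variable {n : ℕ} {Tc : List (Fin n) → Set (Fin n)}

theorem map (f : Fin n → Fin n) (hf : ∀ ν, ∀ w ∈ Tc ν, f w ∈ Tc (ν.map f))
    {ν : List (Fin n)} (hν : IsTNode Tc ν) : IsTNode Tc (ν.map f) := by
  induction hν with
  | root => exact .root
  | @child ν w _ hw ih =>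
    rw [List.map_append, List.map_singleton]
    exact .child ih (hf ν w hw)

variable {g : Equiv.Perm (Fin n)}

theorem map_perm_iff (hTc : ∀ ν, Tc (ν.map g) = g '' Tc ν) {ν : List (Fin n)} :
    IsTNode Tc (ν.map g) ↔ IsTNode Tc ν := by
  have hg : ∀ ν, ∀ w ∈ Tc ν, g w ∈ Tc (ν.map g) := fun ν w hw => hTc ν ▸ ⟨w, hw, rfl⟩
  -- equivariance at `ν.map g⁻¹` gives the same for `g⁻¹`
  have hg_inv : ∀ ν, ∀ w ∈ Tc ν, g⁻¹ w ∈ Tc (ν.map ⇑g⁻¹) := by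
    intro ν w hw
    have hν : (ν.map ⇑g⁻¹).map g = ν := by simp [List.map_map]
    rw [← hν, hTc] at hw
    obtain ⟨u, hu, rfl⟩ := hw
    simpa using hu
  refine ⟨fun h => ?_, IsTNode.map g hg⟩
  simpa [List.map_map] using IsTNode.map (⇑g⁻¹) hg_inv h

theorem prefix_map_perm_iff (hTc : ∀ ν, Tc (ν.map g) = g '' Tc ν) (ν μ : List (Fin n)) :
    (IsTNode Tc μ ∧ ν.map g <+: μ) ↔
      ∃ μ', (IsTNode Tc μ' ∧ ν <+: μ') ∧ μ = μ'.map g := by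
  constructor
  · rintro ⟨hμ, hpre⟩
    have hμ_map : (μ.map ⇑g⁻¹).map g = μ := by simp [List.map_map]
    refine ⟨μ.map ⇑g⁻¹, ⟨(map_perm_iff hTc).1 (by rwa [hμ_map]), ?_⟩, hμ_map.symm⟩
    simpa [List.map_map] using hpre.map ⇑g⁻¹
  · rintro ⟨μ', ⟨hμ', hpre⟩, rfl⟩
    exact ⟨(map_perm_iff hTc).2 hμ', hpre.map g⟩

end IsTNode

theorem stmt8_general {n : ℕ}
    (T : SimpleGraph (Fin n) → (Fin n → ℕ) → List (Fin n) → Set (Fin n))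
    (hT3 : ∀ G π ν (g : Equiv.Perm (Fin n)),
      T (gactG g G) (gactC g π) (ν.map g) = g '' (T G π ν))
    (G : SimpleGraph (Fin n)) (π₀ : Fin n → ℕ) (g : Equiv.Perm (Fin n))
    (hg : gactG g G = G ∧ gactC g π₀ = π₀)
    (ν : List (Fin n)) (hν : IsTNode (T G π₀) ν) :
    IsTNode (T G π₀) (ν.map g) ∧
    ∀ μ : List (Fin n),
      (IsTNode (T G π₀) μ ∧ ν.map g <+: μ) ↔
      (∃ μ' : List (Fin n), (IsTNode (T G π₀) μ' ∧ ν <+: μ') ∧ μ = μ'.map g) := by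
  have hTc : ∀ μ, T G π₀ (μ.map g) = g '' T G π₀ μ := fun μ => by
    rw [← hT3, hg.1, hg.2]
  exact ⟨(IsTNode.map_perm_iff hTc).2 hν, IsTNode.prefix_map_perm_iff hTc ν⟩

/-- For an automorphism g, ν^g is a node and 𝒯(G,π₀,ν^g) = 𝒯(G,π₀,ν)^g. -/
theorem stmt8 {n : ℕ}
    (R : SimpleGraph (Fin n) → (Fin n → ℕ) → List (Fin n) → (Fin n → ℕ))
    (T : SimpleGraph (Fin n) → (Fin n → ℕ) → List (Fin n) → Set (Fin n))
    (hR1 : ∀ G π ν, FinerC (R G π ν) π)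
    (hR2 : ∀ G π ν, ∀ v ∈ ν, (R G π ν) ⁻¹' {R G π ν v} = {v})
    (hR3 : ∀ G π ν (g : Equiv.Perm (Fin n)),
      R (gactG g G) (gactC g π) (ν.map g) = gactC g (R G π ν))
    (hT1 : ∀ G π ν, Function.Injective (R G π ν) → T G π ν = ∅)
    (hT2 : ∀ G π ν, ¬ Function.Injective (R G π ν) →
      ∃ j, T G π ν = (R G π ν) ⁻¹' {j} ∧ ∃ v w, v ∈ T G π ν ∧ w ∈ T G π ν ∧ v ≠ w)
    (hT3 : ∀ G π ν (g : Equiv.Perm (Fin n)),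
      T (gactG g G) (gactC g π) (ν.map g) = g '' (T G π ν))
    (G : SimpleGraph (Fin n)) (π₀ : Fin n → ℕ) (g : Equiv.Perm (Fin n))
    (hg : gactG g G = G ∧ gactC g π₀ = π₀)
    (ν : List (Fin n)) (hν : IsTNode (T G π₀) ν) :
    IsTNode (T G π₀) (ν.map g) ∧
    ∀ μ : List (Fin n),
      (IsTNode (T G π₀) μ ∧ ν.map g <+: μ) ↔
      (∃ μ' : List (Fin n), (IsTNode (T G π₀) μ' ∧ ν <+: μ') ∧ μ = μ'.map g) :=
  stmt8_general T hT3 G π₀ g hg ν hν
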